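/- For all integers n ≥ 1 one has r_n > 0, u_n > 0, w_n > 0, and v_n > 0. -/
import Mathlib


noncomputable section

open Filter


/-- `a₀(n)` from recursion (1). -/
def a0 (x : ℚ) : ℚ := 41218*x^3 - 48459*x^2 + 20010*x - 2871

/-- `a₁(n)` from recursion (1). -/
def a1 (x : ℚ) : ℚ := 2*(48802112*x^9 + 89030880*x^8 + 36002654*x^7 - 24317344*x^6
  - 19538418*x^5 + 1311365*x^4 + 3790503*x^3 + 460056*x^2 - 271701*x - 60291)

/-- `a₂(n)` from recursion (1). -/
def a2 (x : ℚ) : ℚ := 3874492*x^8 - 2617900*x^7 - 3144314*x^6 + 2947148*x^5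
  + 647130*x^4 - 1182926*x^3 + 115771*x^2 + 170716*x - 44541

def b0 (x : ℚ) : ℚ := -a0 (-x)
def b1 (x : ℚ) : ℚ := a2 (-x)
def b2 (x : ℚ) : ℚ := -a1 (-x)

/-- The auxiliary difference equation (8), imposed for all integers `n ≥ 2`. -/
def Rec2 (y : ℕ → ℚ) : Prop := ∀ n : ℕ, 2 ≤ n →
  (n : ℚ)*((n : ℚ) + 1)^5 * b0 ((n : ℚ) - 1) * y (n+1) - 2*(n : ℚ)*b1 (n : ℚ) * y n
    - b2 (n : ℚ) * y (n-1) + 2*((n : ℚ) - 1)^5*(2*(n : ℚ) - 1)*b0 (n : ℚ) * y (n-2) = 0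

/-- The very-well-poised hypergeometric series `r_n`
(the summation index `k ≥ 1` is written as `k + 1` with `k : ℕ`). -/
def rr (n : ℕ) : ℝ := (Nat.factorial n : ℝ)^4 * ∑' k : ℕ,
  (((k : ℝ) + 1) + (n : ℝ)/2)
    * (∏ j ∈ Finset.Icc 1 n, (((k : ℝ) + 1) - (j : ℝ)))
    * (∏ j ∈ Finset.Icc 1 n, (((k : ℝ) + 1) + (n : ℝ) + (j : ℝ)))
    / (∏ j ∈ Finset.range (n+1), (((k : ℝ) + 1) + (j : ℝ))^6)


section auxlemmas

lemma poly_b0₁ (x : ℚ) (hx : 0 ≤ x) : 0 < b0 (x+1) := by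
  unfold b0 a0
  nlinarith [pow_nonneg hx 2, pow_nonneg hx 3, hx]

lemma poly_B (x : ℚ) (hx : 0 ≤ x) : 0 ≤ b2 (x+2) := by
  unfold b2 a1
  nlinarith [pow_nonneg hx 2, pow_nonneg hx 3, pow_nonneg hx 4, pow_nonneg hx 5,
    pow_nonneg hx 6, pow_nonneg hx 7, pow_nonneg hx 8, pow_nonneg hx 9, hx]

lemma poly_BC (x : ℚ) (hx : 0 ≤ x) : 2*(x+1)^5*(2*x+3)*b0 (x+2) ≤ b2 (x+2) := by
  unfold b2 b0 a1 a0
  nlinarith [pow_nonneg hx 2, pow_nonneg hx 3, pow_nonneg hx 4, pow_nonneg hx 5,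
    pow_nonneg hx 6, pow_nonneg hx 7, pow_nonneg hx 8, pow_nonneg hx 9, hx]

lemma poly_ED (x : ℚ) (hx : 0 ≤ x) : (x+3)^5 * b0 (x+1) ≤ 2 * b1 (x+2) := by
  unfold b1 b0 a2 a0
  nlinarith [pow_nonneg hx 2, pow_nonneg hx 3, pow_nonneg hx 4, pow_nonneg hx 5,
    pow_nonneg hx 6, pow_nonneg hx 7, pow_nonneg hx 8, hx]

lemma mono_pos (y : ℕ → ℚ) (hy : Rec2 y)
    (h0 : 0 ≤ y 0) (h01 : y 0 ≤ y 1) (h12 : y 1 ≤ y 2) (h1 : 0 < y 1) :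
    ∀ n : ℕ, 0 ≤ y n ∧ y n ≤ y (n+1) ∧ y (n+1) ≤ y (n+2) ∧ 0 < y (n+1) := by
  intro n
  induction n with
  | zero => exact ⟨h0, h01, h12, h1⟩
  | succ n ih =>
    obtain ⟨hy0, hy01, hy12, hy1pos⟩ := ih
    have hrec := hy (n+2) (by omega)
    have hx : (0:ℚ) ≤ (n:ℚ) := Nat.cast_nonneg n
    push_cast at hrec
    rw [show ((n:ℚ)+2-1 : ℚ) = (n:ℚ)+1 from by ring] at hrec
    have hb0a : 0 < b0 ((n:ℚ)+1) := poly_b0₁ _ hx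
    have hED : ((n:ℚ)+3)^5 * b0 ((n:ℚ)+1) ≤ 2 * b1 ((n:ℚ)+2) := poly_ED _ hx
    have hB : 0 ≤ b2 ((n:ℚ)+2) := poly_B _ hx
    have hBC : 2*((n:ℚ)+1)^5*(2*(n:ℚ)+3)*b0 ((n:ℚ)+2) ≤ b2 ((n:ℚ)+2) := poly_BC _ hx
    have hy2nn : 0 ≤ y (n+2) := le_of_lt (lt_of_lt_of_le hy1pos hy12)
    have t1 : 0 ≤ ((n:ℚ)+2) * (2 * b1 ((n:ℚ)+2) - ((n:ℚ)+3)^5 * b0 ((n:ℚ)+1)) * y (n+2) :=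
      mul_nonneg (mul_nonneg (by linarith) (by linarith)) hy2nn
    have t2 : 0 ≤ b2 ((n:ℚ)+2) * (y (n+1) - y n) := mul_nonneg hB (by linarith)
    have t3 : 0 ≤ (b2 ((n:ℚ)+2) - 2*((n:ℚ)+1)^5*(2*(n:ℚ)+3)*b0 ((n:ℚ)+2)) * y n :=
      mul_nonneg (by linarith) hy0
    have key : 0 ≤ (((n:ℚ)+2)*((n:ℚ)+3)^5*b0 ((n:ℚ)+1)) * (y (n+2+1) - y (n+2)) := by
      nlinarith [hrec, t1, t2, t3]
    have hDpos : 0 < ((n:ℚ)+2)*((n:ℚ)+3)^5*b0 ((n:ℚ)+1) :=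
      mul_pos (mul_pos (by linarith) (pow_pos (by linarith) 5)) hb0a
    have h23 : y (n+2) ≤ y (n+2+1) := by nlinarith [key, hDpos]
    exact ⟨le_trans hy0 hy01, hy12, h23, lt_of_lt_of_le hy1pos hy12⟩

noncomputable def ff (n k : ℕ) : ℝ :=
  (((k : ℝ) + 1) + (n : ℝ)/2)
    * (∏ j ∈ Finset.Icc 1 n, (((k : ℝ) + 1) - (j : ℝ)))
    * (∏ j ∈ Finset.Icc 1 n, (((k : ℝ) + 1) + (n : ℝ) + (j : ℝ)))
    / (∏ j ∈ Finset.range (n+1), (((k : ℝ) + 1) + (j : ℝ))^6)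

lemma denom_pos (n k : ℕ) : 0 < ∏ j ∈ Finset.range (n+1), (((k : ℝ) + 1) + (j : ℝ))^6 := by
  apply Finset.prod_pos
  intro j _
  positivity

lemma ff_pos (n k : ℕ) (h : n ≤ k) : 0 < ff n k := by
  unfold ff
  apply div_pos _ (denom_pos n k)
  apply mul_pos
  · apply mul_pos
    · positivity
    · apply Finset.prod_pos
      intro j hj
      simp only [Finset.mem_Icc] at hj
      have : (j : ℝ) ≤ (k : ℝ) := by exact_mod_cast le_trans hj.2 h
      linarith
  · apply Finset.prod_pos
    intro j hj
    positivity

lemma ff_zero (n k : ℕ) (h : k < n) : ff n k = 0 := by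
  unfold ff
  rw [Finset.prod_eq_zero (i := k+1) (by simp [Finset.mem_Icc]; omega)
    (by push_cast; ring)]
  simp

lemma ff_nonneg (n k : ℕ) : 0 ≤ ff n k := by
  rcases lt_or_ge k n with h | h
  · rw [ff_zero n k h]
  · exact (ff_pos n k h).le

lemma ff_bound (n k : ℕ) :
    ff n k ≤ (((n:ℝ)+1) * (2*(n:ℝ)+1)^n) / ((k:ℝ)+1)^2 := by
  set x : ℝ := (k:ℝ)+1 with hxdef
  have hx1 : (1:ℝ) ≤ x := by rw [hxdef]; linarith [Nat.cast_nonneg (α := ℝ) k]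
  have hx0 : (0:ℝ) < x := by linarith
  have hC : (0:ℝ) ≤ ((n:ℝ)+1) * (2*(n:ℝ)+1)^n := by positivity
  rcases lt_or_ge k n with h | h
  · rw [ff_zero n k h]; positivity
  · -- k ≥ n
    have hkn : (n : ℝ) ≤ (k : ℝ) := by exact_mod_cast h
    unfold ff
    rw [div_le_div_iff₀ (denom_pos n k) (by positivity)]
    -- numerator bound
    have hA : x + (n:ℝ)/2 ≤ ((n:ℝ)+1) * x := by nlinarith [Nat.cast_nonneg (α := ℝ) n]
    have hP1 : ∏ j ∈ Finset.Icc 1 n, (x - (j:ℝ)) ≤ x ^ n := by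
      calc ∏ j ∈ Finset.Icc 1 n, (x - (j:ℝ)) ≤ ∏ j ∈ Finset.Icc 1 n, x := by
            apply Finset.prod_le_prod
            · intro j hj
              simp only [Finset.mem_Icc] at hj
              have : (j:ℝ) ≤ (n:ℝ) := by exact_mod_cast hj.2
              linarith
            · intro j hj
              have : (0:ℝ) ≤ (j:ℝ) := Nat.cast_nonneg j
              linarith
        _ = x ^ n := by rw [Finset.prod_const, Nat.card_Icc]; norm_num
    have hP1nn : 0 ≤ ∏ j ∈ Finset.Icc 1 n, (x - (j:ℝ)) := by
      apply Finset.prod_nonneg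
      intro j hj
      simp only [Finset.mem_Icc] at hj
      have : (j:ℝ) ≤ (n:ℝ) := by exact_mod_cast hj.2
      linarith
    have hP2 : ∏ j ∈ Finset.Icc 1 n, (x + (n:ℝ) + (j:ℝ)) ≤ ((2*(n:ℝ)+1) * x) ^ n := by
      calc ∏ j ∈ Finset.Icc 1 n, (x + (n:ℝ) + (j:ℝ))
          ≤ ∏ j ∈ Finset.Icc 1 n, ((2*(n:ℝ)+1) * x) := by
            apply Finset.prod_le_prod
            · intro j hj; positivity
            · intro j hj
              simp only [Finset.mem_Icc] at hj
              have h1 : (j:ℝ) ≤ (n:ℝ) := by exact_mod_cast hj.2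
              have h2 : (0:ℝ) ≤ (n:ℝ) := Nat.cast_nonneg n
              nlinarith
        _ = ((2*(n:ℝ)+1) * x) ^ n := by rw [Finset.prod_const, Nat.card_Icc]; norm_num
    have hP2nn : 0 ≤ ∏ j ∈ Finset.Icc 1 n, (x + (n:ℝ) + (j:ℝ)) := by
      apply Finset.prod_nonneg; intro j hj; positivity
    have hN : (x + (n:ℝ)/2) * (∏ j ∈ Finset.Icc 1 n, (x - (j:ℝ)))
        * (∏ j ∈ Finset.Icc 1 n, (x + (n:ℝ) + (j:ℝ)))
        ≤ (((n:ℝ)+1) * (2*(n:ℝ)+1)^n) * x ^ (2*n+1) := by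
      calc (x + (n:ℝ)/2) * (∏ j ∈ Finset.Icc 1 n, (x - (j:ℝ)))
            * (∏ j ∈ Finset.Icc 1 n, (x + (n:ℝ) + (j:ℝ)))
          ≤ (((n:ℝ)+1) * x) * (x ^ n) * (((2*(n:ℝ)+1) * x) ^ n) := by
            apply mul_le_mul (mul_le_mul hA hP1 hP1nn (by positivity)) hP2 hP2nn
            positivity
        _ = (((n:ℝ)+1) * (2*(n:ℝ)+1)^n) * x ^ (2*n+1) := by
            rw [mul_pow, show 2*n+1 = n+(n+1) by omega, pow_add, pow_succ]; ring
    have hD : x ^ (6*n+6) ≤ ∏ j ∈ Finset.range (n+1), (x + (j:ℝ))^6 := by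
      calc x ^ (6*n+6) = ∏ _j ∈ Finset.range (n+1), x^6 := by
            rw [Finset.prod_const, Finset.card_range, ← pow_mul]; ring_nf
        _ ≤ ∏ j ∈ Finset.range (n+1), (x + (j:ℝ))^6 := by
            apply Finset.prod_le_prod
            · intro j _; positivity
            · intro j _
              apply pow_le_pow_left₀ (by linarith)
              have : (0:ℝ) ≤ (j:ℝ) := Nat.cast_nonneg j
              linarith
    calc (x + (n:ℝ)/2) * (∏ j ∈ Finset.Icc 1 n, (x - (j:ℝ)))
          * (∏ j ∈ Finset.Icc 1 n, (x + (n:ℝ) + (j:ℝ))) * x^2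
        ≤ ((((n:ℝ)+1) * (2*(n:ℝ)+1)^n) * x ^ (2*n+1)) * x^2 := by
          apply mul_le_mul_of_nonneg_right hN (by positivity)
      _ = (((n:ℝ)+1) * (2*(n:ℝ)+1)^n) * x ^ (2*n+3) := by
          rw [mul_assoc, ← pow_add]
      _ ≤ (((n:ℝ)+1) * (2*(n:ℝ)+1)^n) * x ^ (6*n+6) := by
          apply mul_le_mul_of_nonneg_left (pow_le_pow_right₀ hx1 (by omega)) hC
      _ ≤ (((n:ℝ)+1) * (2*(n:ℝ)+1)^n) * ∏ j ∈ Finset.range (n+1), (x + (j:ℝ))^6 :=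
          mul_le_mul_of_nonneg_left hD hC

lemma ff_summable (n : ℕ) : Summable (ff n) := by
  apply Summable.of_nonneg_of_le (ff_nonneg n) (ff_bound n)
  apply Summable.mul_left
  have h : Summable (fun k : ℕ => 1 / ((k:ℝ))^2) := by
    rw [Real.summable_one_div_nat_pow]
    omega
  have h2 := (summable_nat_add_iff 1).mpr h
  apply h2.congr
  intro k
  push_cast
  rw [one_div]

lemma rr_pos (n : ℕ) (hn : 1 ≤ n) : 0 < rr n := by
  unfold rr
  apply mul_pos (by positivity)
  exact Summable.tsum_pos (ff_summable n) (ff_nonneg n) n (ff_pos n n le_rfl)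

end auxlemmas

/-- For all integers `n ≥ 1`: `r_n > 0`, `u_n > 0`, `w_n > 0`, `v_n > 0`. -/
theorem stmt12
    (u w v : ℕ → ℚ)
    (hu : Rec2 u) (hw : Rec2 w) (hv : Rec2 v)
    (hu0 : u 0 = 1) (hu1 : u 1 = 9) (hu2 : u 2 = 469)
    (hw0 : w 0 = 0) (hw1 : w 1 = 33) (hw2 : w 2 = 6125/4)
    (hv0 : v 0 = 0) (hv1 : v 1 = 49) (hv2 : v 2 = 74463/32) :
    ∀ n : ℕ, 1 ≤ n → 0 < rr n ∧ 0 < u n ∧ 0 < w n ∧ 0 < v n := by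
  intro n hn
  obtain ⟨m, rfl⟩ : ∃ m, n = m + 1 := ⟨n - 1, by omega⟩
  refine ⟨rr_pos _ hn, ?_, ?_, ?_⟩
  · exact (mono_pos u hu (by rw [hu0]; norm_num) (by rw [hu0, hu1]; norm_num)
      (by rw [hu1, hu2]; norm_num) (by rw [hu1]; norm_num) m).2.2.2
  · exact (mono_pos w hw (by rw [hw0]) (by rw [hw0, hw1]; norm_num)
      (by rw [hw1, hw2]; norm_num) (by rw [hw1]; norm_num) m).2.2.2
  · exact (mono_pos v hv (by rw [hv0]) (by rw [hv0, hv1]; norm_num)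
      (by rw [hv1, hv2]; norm_num) (by rw [hv1]; norm_num) m).2.2.2
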